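/- Let σ: ℕ → ℕ be a bijection and let T = T_σ be the associated permutation operator on H. If every equivalence class [m] is finite and sup{card([m]) : m ∈ ℕ} = ∞, then P(T) is a proper dense subspace of H (i.e. P(T) ≠ H and the closure of P(T) equals H). -/

import Mathlib

/-!
Since every orbit of `σ` is finite, every basis vector `e n` is a periodic point of `T`, and the
periodic points of a linear map form a subspace; so they contain the span of the basis, which is
dense. If every vector were periodic, the closed subspaces `ker (T ^ k - 1)` would cover `H`, so by
Baire one of them has nonempty interior, i.e. `T ^ k = 1` for a single `k`. Then every orbit of
`σ` has at most `k` elements, contradicting their unboundedness.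
-/

/-- The orbit `[n] = {σ^k n : k ∈ ℤ}` of `n` under the bijection `σ : ℕ → ℕ`. -/
def permOrbit (σ : Equiv.Perm ℕ) (n : ℕ) : Set ℕ := {m : ℕ | ∃ z : ℤ, (σ ^ z) n = m}

open Function Set

namespace Module.End

variable {R M : Type*} [Semiring R] [AddCommMonoid M] [Module R M]

def periodicPtsSubmodule (f : Module.End R M) : Submodule R M where
  carrier := periodicPts f
  zero_mem' := ⟨1, one_pos, map_zero f⟩
  add_mem' := by
    rintro x y ⟨m, hm, hx⟩ ⟨n, hn, hy⟩
    refine ⟨m * n, mul_pos hm hn, ?_⟩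
    change f^[m * n] (x + y) = x + y
    rw [← coe_pow, map_add, coe_pow, (hx.mul_const n).eq, (hy.const_mul m).eq]
  smul_mem' c x := by
    rintro ⟨m, hm, hx⟩
    refine ⟨m, hm, ?_⟩
    change f^[m] (c • x) = c • x
    rw [← coe_pow, map_smul, coe_pow, hx.eq]

end Module.End

theorem ContinuousLinearMap.exists_pow_eq_one_of_periodicPts_eq_univ
    {𝕜 E : Type*} [NontriviallyNormedField 𝕜] [AddCommGroup E] [Module 𝕜 E] [TopologicalSpace E]
    [IsTopologicalAddGroup E] [ContinuousSMul 𝕜 E] [T1Space E] [BaireSpace E]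
    {T : E →L[𝕜] E} (hT : periodicPts T = univ) : ∃ n, 0 < n ∧ T ^ n = 1 := by
  let K (n : ℕ) : Submodule 𝕜 E := LinearMap.ker ((T ^ (n + 1) - 1 : E →L[𝕜] E) : E →ₗ[𝕜] E)
  have mem_K {n : ℕ} {x : E} : x ∈ K n ↔ IsPeriodicPt T (n + 1) x := by
    change (T ^ (n + 1) - 1) x = 0 ↔ T^[n + 1] x = x
    rw [sub_apply, one_apply_eq_self, sub_eq_zero, FunLike.coe_pow_eq_iterate]
  have hcover : ⋃ n, (K n : Set E) = univ := by
    refine eq_univ_of_forall fun x => ?_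
    obtain ⟨m, hm, hx⟩ : x ∈ periodicPts T := hT ▸ mem_univ x
    obtain ⟨n, rfl⟩ : ∃ n, m = n + 1 := ⟨m - 1, by omega⟩
    exact mem_iUnion.2 ⟨n, mem_K.2 hx⟩
  obtain ⟨n, hn⟩ :=
    nonempty_interior_of_iUnion_of_closed (fun n => (T ^ (n + 1) - 1).isClosed_ker) hcover
  have hKn : K n = ⊤ := (K n).eq_top_of_nonempty_interior' hn
  refine ⟨n + 1, n.succ_pos, ContinuousLinearMap.ext fun x => ?_⟩
  rw [one_apply_eq_self, FunLike.coe_pow_eq_iterate]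
  exact mem_K.1 (hKn ▸ Submodule.mem_top)

theorem Function.Semiconj.isPeriodicPt_apply_iff {α β : Type*} {g : α → β} {fa : α → α}
    {fb : β → β} (h : Semiconj g fa fb) (hg : Injective g) {n : ℕ} {x : α} :
    IsPeriodicPt fb n (g x) ↔ IsPeriodicPt fa n x := by
  rw [IsPeriodicPt, IsPeriodicPt, IsFixedPt, IsFixedPt, ← (h.iterate_right n).eq, hg.eq_iff]

theorem permOrbit_eq_orbit_zpowers (σ : Equiv.Perm ℕ) (n : ℕ) :
    permOrbit σ n = MulAction.orbit (Subgroup.zpowers σ) n := by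
  ext m
  constructor
  · rintro ⟨k, rfl⟩
    exact ⟨⟨σ ^ k, k, rfl⟩, rfl⟩
  · rintro ⟨⟨_, k, rfl⟩, rfl⟩
    exact ⟨k, rfl⟩

-- Both sides are `0` on infinite orbits: `ZMod 0 = ℤ` has `Nat.card` zero.
theorem ncard_permOrbit (σ : Equiv.Perm ℕ) (n : ℕ) :
    (permOrbit σ n).ncard = minimalPeriod σ n := by
  rw [permOrbit_eq_orbit_zpowers, ← Nat.card_coe_set_eq,
    Nat.card_congr (MulAction.orbitZPowersEquiv σ n), Nat.card_zmod]
  rfl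

theorem mem_periodicPts_of_finite_permOrbit {σ : Equiv.Perm ℕ} {n : ℕ}
    (h : (permOrbit σ n).Finite) : n ∈ periodicPts σ := by
  rw [← minimalPeriod_pos_iff_mem_periodicPts, ← ncard_permOrbit]
  exact Set.Nonempty.ncard_pos h ⟨n, 0, rfl⟩

/-- For a permutation operator `T e_n = e_{σ n}` where every orbit of `σ` is finite but the
orbit cardinalities are unbounded, the set of periodic points of `T` is a proper dense
subspace of `H`. -/
theorem permutation_periodic_points_proper_dense
    {H : Type*} [NormedAddCommGroup H] [InnerProductSpace ℂ H] [CompleteSpace H]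
    (e : HilbertBasis ℕ ℂ H) (σ : Equiv.Perm ℕ) (T : H →L[ℂ] H)
    (hT : ∀ n, T (e n) = e (σ n))
    (hfin : ∀ m : ℕ, (permOrbit σ m).Finite)
    (hub : ∀ B : ℕ, ∃ m : ℕ, B < (permOrbit σ m).ncard) :
    {x : H | ∃ m : ℕ, 0 < m ∧ (T ^ m) x = x} ≠ Set.univ ∧
    Dense {x : H | ∃ m : ℕ, 0 < m ∧ (T ^ m) x = x} := by
  have hP : {x : H | ∃ m : ℕ, 0 < m ∧ (T ^ m) x = x} = periodicPts T := by
    ext x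
    simp [mem_periodicPts, IsPeriodicPt, IsFixedPt]
  have hsemi : Semiconj e σ T := fun n => (hT n).symm
  have he : Injective e := e.orthonormal.linearIndependent.injective
  rw [hP]
  constructor
  · intro huniv
    obtain ⟨N, hN, hTN⟩ := T.exists_pow_eq_one_of_periodicPts_eq_univ huniv
    obtain ⟨n, hn⟩ := hub N
    have hper : IsPeriodicPt σ N n := by
      rw [← hsemi.isPeriodicPt_apply_iff he, IsPeriodicPt, IsFixedPt,
        ← FunLike.coe_pow_eq_iterate, hTN, one_apply_eq_self]
    rw [ncard_permOrbit] at hn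
    exact (hper.minimalPeriod_le hN).not_gt hn
  · have hspan : Submodule.span ℂ (range e) ≤ Module.End.periodicPtsSubmodule (T : H →ₗ[ℂ] H) :=
      Submodule.span_le.2 <| range_subset_iff.2 fun n =>
        hsemi.mapsTo_periodicPts (mem_periodicPts_of_finite_permOrbit (hfin n))
    exact (Submodule.dense_iff_topologicalClosure_eq_top.2 e.dense_span).mono hspan
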